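/- Let ξ_{n,i} be defined by ξ_{0,0} = 1, ξ_{0,i} = 0 for i ≠ 0, and ξ_{n+1,i} = (1+2n−6i)·ξ_{n,i} + (n−2i+2)·ξ_{n,i−1} − 4(i+1)·ξ_{n,i+1}, and set ξ_n(x) = Σ_{i=0}^{⌊n/2⌋} ξ_{n,i} x^i. Then for every n ≥ 0 and every real x ≠ 0, ξ_n(x²−1) = xⁿ · Q_n(1/x), where Q_n is the n-th derivative polynomial for secant. -/

import Mathlib

open Finset

/-- Signed permutations of order `n` (the hyperoctahedral group), modeled as a
permutation of `Fin n` together with a sign for each position. -/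
abbrev BSigned (n : ℕ) := Equiv.Perm (Fin n) × (Fin n → Bool)

/-- The word of a signed permutation: `bword σ j = σ(j)` for `1 ≤ j ≤ n`,
with the convention `σ(0) = 0`. -/
def bword {n : ℕ} (σ : BSigned n) (j : ℕ) : ℤ :=
  if h : 1 ≤ j ∧ j ≤ n then
    (if σ.2 ⟨j - 1, by omega⟩ then -1 else 1) * ((σ.1 ⟨j - 1, by omega⟩ : ℕ) + 1)
  else 0

/-- The number of alternating descents of a signed permutation: the number of
`0 ≤ j ≤ n-1` such that `j` is even and `σ(j) < σ(j+1)`, or `j` is odd and `σ(j) > σ(j+1)`. -/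
def altdesB {n : ℕ} (σ : BSigned n) : ℕ :=
  ((Finset.range n).filter (fun j => (Even j ∧ bword σ j < bword σ (j + 1)) ∨
      (Odd j ∧ bword σ (j + 1) < bword σ j))).card

/-- The type B alternating Eulerian number `B̂(n,k)`. -/
def Bhat (n k : ℕ) : ℕ :=
  (Finset.univ.filter (fun σ : BSigned n => altdesB σ = k)).card

/-- The type B alternating Eulerian polynomial `B̂_n(x)` as a real function. -/
noncomputable def Bpoly (n : ℕ) (x : ℝ) : ℝ :=
  ∑ σ : BSigned n, x ^ altdesB σ

/-- The word of a permutation of `{1,…,n}`: `aword π j = π(j)` for `1 ≤ j ≤ n`,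
with the convention `π(0) = 0`. -/
def aword {n : ℕ} (π : Equiv.Perm (Fin n)) (j : ℕ) : ℕ :=
  if h : 1 ≤ j ∧ j ≤ n then (π ⟨j - 1, by omega⟩ : ℕ) + 1 else 0

/-- The number of alternating descents of a permutation: the number of
`1 ≤ j ≤ n-1` such that `j` is odd and `π(j) > π(j+1)`, or `j` is even and `π(j) < π(j+1)`. -/
def altdesA {n : ℕ} (π : Equiv.Perm (Fin n)) : ℕ :=
  ((Finset.Icc 1 (n - 1)).filter (fun j => (Odd j ∧ aword π (j + 1) < aword π j) ∨
      (Even j ∧ aword π j < aword π (j + 1)))).card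

/-- The type A alternating Eulerian number `Â(n,k)`. -/
def Ahat (n k : ℕ) : ℕ :=
  (Finset.univ.filter (fun π : Equiv.Perm (Fin n) => altdesA π = k)).card

/-- The type A alternating Eulerian polynomial `Â_n(x)` as a real function. -/
noncomputable def Apoly (n : ℕ) (x : ℝ) : ℝ :=
  ∑ π : Equiv.Perm (Fin n), x ^ altdesA π

/-- The number of left peaks of a permutation: indices `1 ≤ i ≤ n-1` with
`π(i-1) < π(i) > π(i+1)`, where `π(0) = 0`. -/
def lpk {n : ℕ} (π : Equiv.Perm (Fin n)) : ℕ :=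
  ((Finset.Icc 1 (n - 1)).filter (fun i =>
      aword π (i - 1) < aword π i ∧ aword π (i + 1) < aword π i)).card

/-- `M n k` is the number of permutations of `{1,…,n}` with exactly `k` left peaks. -/
def M (n k : ℕ) : ℕ :=
  (Finset.univ.filter (fun π : Equiv.Perm (Fin n) => lpk π = k)).card

/-- The derivative polynomials for secant: `Q 0 = 1`,
`Q (n+1) = x Q n + (1+x²) (Q n)'`. -/
noncomputable def Q : ℕ → Polynomial ℝ
  | 0 => 1
  | n + 1 => Polynomial.X * Q n + (1 + Polynomial.X ^ 2) * Polynomial.derivative (Q n)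

/-- The coefficients `ξ_{n,i}` (terms with negative index vanish). -/
def xi : ℕ → ℤ → ℤ
  | 0, i => if i = 0 then 1 else 0
  | n + 1, i => (1 + 2 * (n : ℤ) - 6 * i) * xi n i + ((n : ℤ) - 2 * i + 2) * xi n (i - 1)
      - 4 * (i + 1) * xi n (i + 1)

/-- The polynomial `ξ_n(x) = Σ_{i=0}^{⌊n/2⌋} ξ_{n,i} x^i` as a real function. -/
noncomputable def xiPoly (n : ℕ) (x : ℝ) : ℝ :=
  ∑ i ∈ Finset.range (n / 2 + 1), (xi n i : ℝ) * x ^ i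

/-- A snake: a signed permutation with `σ(0) < σ(1) > σ(2) < σ(3) > ⋯`. -/
def IsSnake {n : ℕ} (σ : BSigned n) : Prop :=
  ∀ i : ℕ, (2 * i + 1 ≤ n → bword σ (2 * i) < bword σ (2 * i + 1)) ∧
    (2 * i + 2 ≤ n → bword σ (2 * i + 2) < bword σ (2 * i + 1))

/-- The Springer number `s_n`: the number of snakes of order `n`. -/
noncomputable def springer (n : ℕ) : ℕ := Nat.card {σ : BSigned n // IsSnake σ}

/-- An alternating (down-up) permutation: `π(1) > π(2) < π(3) > ⋯`. -/
def IsAlternating {m : ℕ} (π : Equiv.Perm (Fin m)) : Prop :=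
  ∀ j : ℕ, 1 ≤ j → j + 1 ≤ m →
    (Odd j → aword π (j + 1) < aword π j) ∧ (Even j → aword π j < aword π (j + 1))

/-- The secant number `E_{2n}`: the number of alternating permutations of `{1,…,2n}`. -/
noncomputable def secantNumber (n : ℕ) : ℕ :=
  Nat.card {π : Equiv.Perm (Fin (2 * n)) // IsAlternating π}

/-! Both `x ↦ ξ_n(x² - 1)` and `x ↦ xⁿ Q_n(1/x)` satisfy
`f_{n+1} = (1 + n (x² + 1)) f_n - x (x² + 1) f_n'` with `f_0 = 1`. For the first this is the
recurrence of the `ξ_{n,i}` read as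
`ξ_{n+1}(t) = (1 + 2n + n t) ξ_n(t) - 2 (t + 1) (t + 2) ξ_n'(t)` at `t = x² - 1`; for the second
it is the recurrence of `Q_n` after the chain rule. Away from `x = 0` the two functions agree on a
neighbourhood, so their derivatives agree as well and the induction goes through. -/

open Polynomial

noncomputable def xiPolynomial (n : ℕ) : ℝ[X] :=
  ∑ i ∈ range (n / 2 + 1), C (xi n i : ℝ) * X ^ i

theorem xiPoly_eq_eval (n : ℕ) (y : ℝ) : xiPoly n y = (xiPolynomial n).eval y := by
  simp [xiPoly, xiPolynomial, eval_finsetSum]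

theorem xi_eq_zero_of_neg (n : ℕ) {i : ℤ} (hi : i < 0) : xi n i = 0 := by
  induction n generalizing i with
  | zero => simp [xi]; omega
  | succ n ih =>
    rw [xi, ih hi, ih (by omega : i - 1 < 0)]
    rcases eq_or_lt_of_le (show i ≤ -1 by omega) with rfl | _
    · ring
    · rw [ih (by omega : i + 1 < 0)]; ring

theorem xi_eq_zero_of_lt_two_mul (n : ℕ) {i : ℤ} (hi : (n : ℤ) < 2 * i) : xi n i = 0 := by
  induction n generalizing i with
  | zero => simp [xi]; omega
  | succ n ih =>
    push_cast at hi
    rw [xi, ih (by omega : (n : ℤ) < 2 * i), ih (by omega : (n : ℤ) < 2 * (i + 1))]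
    rcases eq_or_lt_of_le (show (n : ℤ) + 2 ≤ 2 * i by omega) with h | h
    · rw [show (n : ℤ) - 2 * i + 2 = 0 by omega]; ring
    · rw [ih (by omega : (n : ℤ) < 2 * (i - 1))]; ring

theorem coeff_xiPolynomial (n k : ℕ) : (xiPolynomial n).coeff k = xi n k := by
  simp only [xiPolynomial, finsetSum_coeff, coeff_C_mul, coeff_X_pow, mul_ite, mul_one,
    mul_zero, sum_ite_eq, mem_range, ite_eq_left_iff, not_lt]
  intro hk
  rw [xi_eq_zero_of_lt_two_mul n (by omega), Int.cast_zero]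

theorem xiPolynomial_succ (n : ℕ) :
    xiPolynomial (n + 1) = (C (1 + 2 * n : ℝ) + C (n : ℝ) * X) * xiPolynomial n
      - C 2 * ((X + 1) * (X + 2)) * derivative (xiPolynomial n) := by
  -- every monomial factor written as `X ^ k`, so that `coeff_X_pow_mul'` reads off coefficients
  have expand : ∀ p : ℝ[X], (C (1 + 2 * n : ℝ) + C (n : ℝ) * X) * p
      - C 2 * ((X + 1) * (X + 2)) * derivative p
      = C (1 + 2 * n : ℝ) * p + C (n : ℝ) * (X ^ 1 * p)
      - C 2 * (X ^ 2 * derivative p) - C 6 * (X ^ 1 * derivative p) - C 4 * derivative p := by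
    intro p
    simp only [map_ofNat]
    ring
  ext k
  rw [expand]
  simp only [coeff_sub, coeff_add, coeff_C_mul, coeff_X_pow_mul', coeff_derivative,
    coeff_xiPolynomial]
  rcases k with _ | _ | k <;> simp [xi, xi_eq_zero_of_neg] <;> ring

theorem eval_xiPolynomial_succ_sq_sub_one (n : ℕ) (x : ℝ) :
    (xiPolynomial (n + 1)).eval (x ^ 2 - 1)
      = (1 + n * (x ^ 2 + 1)) * (xiPolynomial n).eval (x ^ 2 - 1)
      - x * (x ^ 2 + 1) * deriv (fun y => (xiPolynomial n).eval (y ^ 2 - 1)) x := by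
  have hderiv : HasDerivAt (fun y => (xiPolynomial n).eval (y ^ 2 - 1))
      ((derivative (xiPolynomial n)).eval (x ^ 2 - 1) * (2 * x)) x := by
    simpa [Function.comp_def] using
      ((xiPolynomial n).hasDerivAt _).comp x ((hasDerivAt_pow 2 x).sub_const 1)
  rw [hderiv.deriv, xiPolynomial_succ]
  simp only [eval_sub, eval_add, eval_mul, eval_C, eval_X, eval_one, eval_ofNat]
  ring

theorem pow_mul_eval_Q_succ (n : ℕ) {x : ℝ} (hx : x ≠ 0) :
    x ^ (n + 1) * (Q (n + 1)).eval (1 / x)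
      = (1 + n * (x ^ 2 + 1)) * (x ^ n * (Q n).eval (1 / x))
      - x * (x ^ 2 + 1) * deriv (fun y => y ^ n * (Q n).eval (1 / y)) x := by
  have hderiv : HasDerivAt (fun y => y ^ n * (Q n).eval (1 / y))
      (n * x ^ (n - 1) * (Q n).eval (1 / x)
        + x ^ n * ((derivative (Q n)).eval (1 / x) * -(x ^ 2)⁻¹)) x := by
    refine (hasDerivAt_pow n x).mul ?_
    simpa [one_div, Function.comp_def] using ((Q n).hasDerivAt x⁻¹).comp x (hasDerivAt_inv hx)
  have hpow : x * (n * x ^ (n - 1)) = n * x ^ n := by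
    cases n with
    | zero => simp
    | succ m => rw [Nat.add_sub_cancel, pow_succ]; ring
  rw [hderiv.deriv, Q]
  simp only [eval_add, eval_mul, eval_X, eval_one, eval_pow]
  field_simp
  linear_combination (Q n).eval (1 / x) * (x ^ 2 + x ^ 4) * hpow

theorem eval_xiPolynomial_sq_sub_one (n : ℕ) {x : ℝ} (hx : x ≠ 0) :
    (xiPolynomial n).eval (x ^ 2 - 1) = x ^ n * (Q n).eval (1 / x) := by
  induction n generalizing x with
  | zero => simp [xiPolynomial, Q, xi]
  | succ n ih =>
    have hderiv : deriv (fun y => (xiPolynomial n).eval (y ^ 2 - 1)) x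
        = deriv (fun y => y ^ n * (Q n).eval (1 / y)) x :=
      Filter.EventuallyEq.deriv_eq (eventually_ne_nhds hx |>.mono fun y hy => ih hy)
    rw [eval_xiPolynomial_succ_sq_sub_one, pow_mul_eval_Q_succ n hx, ih hx, hderiv]

/-- `ξ_n(x²-1) = xⁿ Q_n(1/x)` for `x ≠ 0`, where `Q_n` is the
`n`-th derivative polynomial for secant. -/
theorem stmt13 (n : ℕ) (x : ℝ) (hx : x ≠ 0) :
    xiPoly n (x ^ 2 - 1) = x ^ n * (Q n).eval (1 / x) := by
  rw [xiPoly_eq_eval, eval_xiPolynomial_sq_sub_one n hx]
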